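/- arXiv:math/0601199 — 4 statements merged into one kernel-verified Lean document; each statement's English description precedes it below -/
import Mathlib

section
/- Let n be a finite type with decidable equality and let M : Matrix n n ℕ be a matrix such that every row sum equals 2 (∑_j M i j = 2 for all i) and every column sum equals 2 (∑_i M i j = 2 for all j). Then there exist permutations σ, τ : Equiv.Perm n such that M is the sum of the two corresponding permutation matrices: M i j = (σ.permMatrix ℕ) i j + (τ.permMatrix ℕ) i j for all i, j. -/
open Finset

lemma sum_eq_one_exists {n : Type*} [Fintype n] [DecidableEq n]
    (f : n → ℕ) (h : ∑ j, f j = 1) : ∃ j, f j = 1 ∧ ∀ k, k ≠ j → f k = 0 := by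
  obtain ⟨j, hj⟩ : ∃ j, f j ≠ 0 := by
    by_contra hc; push_neg at hc; simp [hc] at h
  have h1 : f j + ∑ k ∈ univ.erase j, f k = 1 := by
    rw [Finset.add_sum_erase _ f (mem_univ j)]; exact h
  have h2 : ∑ k ∈ univ.erase j, f k = 0 := by omega
  refine ⟨j, by omega, fun k hk => ?_⟩
  exact (Finset.sum_eq_zero_iff.mp h2) k (by simp [hk])

/-- A square matrix of natural numbers in which every row sum and every column
sum equals `2` is the sum of two permutation matrices. -/
theorem eq_sum_two_permMatrices {n : Type*} [Fintype n] [DecidableEq n]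
    (M : Matrix n n ℕ) (hrow : ∀ i, ∑ j, M i j = 2) (hcol : ∀ j, ∑ i, M i j = 2) :
    ∃ σ τ : Equiv.Perm n, ∀ i j, M i j = σ.permMatrix ℕ i j + τ.permMatrix ℕ i j := by
  classical
  set t : n → Finset n := fun i => univ.filter (fun j => 1 ≤ M i j) with ht
  have hall : ∀ s : Finset n, s.card ≤ (s.biUnion t).card := by
    intro s
    have h2 : ∀ i ∈ s, ∑ j, M i j = ∑ j ∈ s.biUnion t, M i j := by
      intro i hi
      rw [← Finset.sum_subset (Finset.subset_univ _)]
      intro j _ hj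
      by_contra hc
      have hji : j ∈ t i := by simp [ht]; omega
      exact hj (Finset.mem_biUnion.mpr ⟨i, hi, hji⟩)
    have h3 : 2 * s.card = ∑ j ∈ s.biUnion t, ∑ i ∈ s, M i j := by
      rw [Finset.sum_comm]
      calc 2 * s.card = ∑ i ∈ s, ∑ j, M i j := by simp [hrow]; ring
        _ = _ := Finset.sum_congr rfl h2
    have h4 : ∑ j ∈ s.biUnion t, ∑ i ∈ s, M i j ≤ 2 * (s.biUnion t).card := by
      calc ∑ j ∈ s.biUnion t, ∑ i ∈ s, M i j ≤ ∑ j ∈ s.biUnion t, 2 := by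
            apply Finset.sum_le_sum
            intro j _
            calc ∑ i ∈ s, M i j ≤ ∑ i, M i j :=
                  Finset.sum_le_sum_of_subset (subset_univ s)
              _ = 2 := hcol j
        _ = 2 * (s.biUnion t).card := by simp [mul_comm]
    omega
  obtain ⟨f, hfinj, hft⟩ := (Finset.all_card_le_biUnion_card_iff_exists_injective t).mp hall
  let σ : Equiv.Perm n := Equiv.ofBijective f (Finite.injective_iff_bijective.mp hfinj)
  have hσ : ∀ i, 1 ≤ M i (σ i) := by
    intro i
    have := hft i
    simp [ht] at this
    exact this
  set N : Matrix n n ℕ := fun i j => M i j - if σ i = j then 1 else 0 with hN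
  have key : ∀ i j, M i j = (if σ i = j then 1 else 0) + N i j := by
    intro i j
    by_cases h : σ i = j
    · subst h; have := hσ i; simp [hN]; omega
    · simp [hN, h]
  have hite : ∀ i, ∑ j, (if σ i = j then (1:ℕ) else 0) = 1 := by
    intro i; simp
  have hrowN : ∀ i, ∑ j, N i j = 1 := by
    intro i
    have : (2:ℕ) = 1 + ∑ j, N i j := by
      rw [← hrow i]
      calc ∑ j, M i j = ∑ j, ((if σ i = j then 1 else 0) + N i j) :=
            Finset.sum_congr rfl (fun j _ => key i j)
        _ = (∑ j, if σ i = j then (1:ℕ) else 0) + ∑ j, N i j := Finset.sum_add_distrib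
        _ = 1 + ∑ j, N i j := by rw [hite i]
    omega
  have hcolN : ∀ j, ∑ i, N i j = 1 := by
    intro j
    have hite2 : ∑ i, (if σ i = j then (1:ℕ) else 0) = 1 := by
      simp only [Equiv.apply_eq_iff_eq_symm_apply]
      simp
    have : (2:ℕ) = 1 + ∑ i, N i j := by
      rw [← hcol j]
      calc ∑ i, M i j = ∑ i, ((if σ i = j then 1 else 0) + N i j) :=
            Finset.sum_congr rfl (fun i _ => key i j)
        _ = (∑ i, if σ i = j then (1:ℕ) else 0) + ∑ i, N i j := Finset.sum_add_distrib
        _ = 1 + ∑ i, N i j := by rw [hite2]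
    omega
  choose g hg1 hg0 using fun i => sum_eq_one_exists (N i) (hrowN i)
  have hginj : Function.Injective g := by
    intro a b hab
    by_contra hne
    have hb : N b (g a) ≤ ∑ x ∈ univ.erase a, N x (g a) :=
      Finset.single_le_sum (f := fun x => N x (g a)) (fun i _ => Nat.zero_le _) (Finset.mem_erase.mpr ⟨fun h => hne h.symm, mem_univ b⟩)
    have h1 : N a (g a) + N b (g a) ≤ ∑ i, N i (g a) := by
      rw [← Finset.add_sum_erase _ _ (mem_univ a)]
      omega
    have hc := hcolN (g a)
    have ha := hg1 a
    have hb1 := hg1 b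
    rw [← hab] at hb1
    omega
  let τ : Equiv.Perm n := Equiv.ofBijective g (Finite.injective_iff_bijective.mp hginj)
  have hNτ : ∀ i j, N i j = if τ i = j then 1 else 0 := by
    intro i j
    by_cases h : τ i = j
    · simp [h]; rw [← h]; exact hg1 i
    · simp [h]
      exact hg0 i j (by intro hc; exact h (by simp [τ, Equiv.ofBijective]; exact hc.symm ▸ rfl))
  refine ⟨σ, τ, fun i j => ?_⟩
  rw [key i j, hNτ i j]
  simp [Equiv.Perm.permMatrix, PEquiv.toMatrix_apply, Equiv.toPEquiv_apply, Option.mem_def, eq_comm]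
end

section
/- For every natural number k, the identity 2·(J_{2k+1} − 1) − X · J_{2k} = (X − 2) · (J_k + J_{k−1})² holds in ℚ[X] (with J_{−1} = 0). -/
open Polynomial

/-- The Chebyshev-type polynomials `J k ∈ ℚ[X]` for natural indices:
`J 0 = 1`, `J 1 = X`, and `J (k+2) = X·J (k+1) - J k`;
equivalently `J k (x) = U k (x/2)` with `U k` the Chebyshev polynomial
of the second kind. -/
noncomputable def Jnat : ℕ → ℚ[X]
  | 0 => 1
  | 1 => X
  | (n + 2) => X * Jnat (n + 1) - Jnat n

/-- The extension of `Jnat` to integer indices, satisfying the same recurrence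
`J (k+2) = X·J (k+1) - J k` for all `k ∈ ℤ`; in particular `J (-1) = 0` and
`J (-(n+2)) = - J n`. -/
noncomputable def J : ℤ → ℚ[X]
  | Int.ofNat n => Jnat n
  | Int.negSucc 0 => 0
  | Int.negSucc (n + 1) => -Jnat n

/-!
`J` is Mathlib's rescaled Chebyshev polynomial `Chebyshev.S ℚ`. Put `a = S k`, `b = S (k - 1)`.
The addition formula `S (m + n) = S m * S n - S (m - 1) * S (n - 1)` gives
`S (2k + 1) = (X a - b) a - a b` and `S (2k) = a² - b²`, so the left side is
`X a² - 4 a b + X b² - 2`. The Cassini-type identity `a² - X a b + b² = 1` rewrites the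
constant `-2` as `-2 (a² - X a b + b²)`, leaving `(X - 2) (a + b)²`.
-/

namespace Polynomial.Chebyshev

variable (R : Type*) [CommRing R]

theorem S_add (m n : ℤ) : S R (m + n) = S R m * S R n - S R (m - 1) * S R (n - 1) := by
  induction n using Polynomial.Chebyshev.induct with
  | zero => simp
  | one => simp [S_add_one, mul_comm]
  | add_two n ih1 ih0 =>
    have h₁ := S_add_two R (m + n)
    have h₂ := S_add_two R n
    have h₃ := S_add_one R n
    linear_combination (norm := ring_nf) h₁ + X * ih1 - ih0 - S R m * h₂ + S R (m - 1) * h₃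
  | neg_add_one n ih0 ih1 =>
    have h₁ := S_sub_one R (m - n)
    have h₂ := S_sub_one R (-n)
    have h₃ := S_sub_two R (-n)
    linear_combination (norm := ring_nf) h₁ + X * ih0 - ih1 - S R m * h₂ + S R (m - 1) * h₃

theorem S_two_mul_add_one_factorization (k : ℤ) :
    2 * (S R (2 * k + 1) - 1) - X * S R (2 * k) = (X - 2) * (S R k + S R (k - 1)) ^ 2 := by
  have hodd : S R (2 * k + 1) = S R (k + 1) * S R k - S R k * S R (k - 1) := by
    rw [show 2 * k + 1 = (k + 1) + k by ring, S_add, add_sub_cancel_right]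
  have heven : S R (2 * k) = S R k ^ 2 - S R (k - 1) ^ 2 := by
    rw [two_mul, S_add]; ring
  have hdet := S_sq_add_S_sq R (k - 1)
  rw [sub_add_cancel] at hdet
  rw [hodd, heven, S_add_one]
  linear_combination 2 * hdet

end Polynomial.Chebyshev

open Polynomial.Chebyshev

theorem Jnat_eq_S (n : ℕ) : Jnat n = S ℚ n := by
  induction n using Jnat.induct with
  | case1 => simp [Jnat]
  | case2 => simp [Jnat]
  | case3 n ih0 ih1 =>
    rw [Jnat, ih0, ih1]
    exact_mod_cast (S_add_two ℚ n).symm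

theorem J_eq_S : ∀ n : ℤ, J n = S ℚ n
  | Int.ofNat n => Jnat_eq_S n
  | Int.negSucc 0 => by simp [J]
  | Int.negSucc (n + 1) => by
    rw [J, Jnat_eq_S, Int.negSucc_eq, ← S_neg_sub_two]
    congr 1
    push_cast
    ring

/-- Factorization of the characteristic polynomial of the odd cyclic torus
knot: `2·(J (2k+1) - 1) - X·J (2k) = (X - 2)·(J k + J (k-1))²`
(with `J (-1) = 0`). -/
theorem cyclic_torus_knot_factorization (k : ℕ) :
    2 * (J (2 * k + 1) - 1) - X * J (2 * k) =
      (X - 2) * (J k + J ((k : ℤ) - 1)) ^ 2 := by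
  simp only [J_eq_S]
  exact S_two_mul_add_one_factorization ℚ k
end

section
/- For every natural number k ≥ 1, the identity 2·(J_{2k} − 1) − X · J_{2k−1} = (X² − 4) · (J_{k−1})² holds in ℚ[X]. -/
open Polynomial

lemma Jrec (n : ℕ) : Jnat (n + 2) = X * Jnat (n + 1) - Jnat n := rfl

lemma Jdet (n : ℕ) : Jnat (n + 2) * Jnat n = Jnat (n + 1) ^ 2 - 1 := by
  induction n with
  | zero => simp [Jnat, Jrec]; ring
  | succ n ih => linear_combination ih - Jnat (n + 2) * Jrec n + Jnat (n + 1) * Jrec (n + 1)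

lemma Jkey (n : ℕ) :
    (Jnat (2 * n + 2) - Jnat (2 * n) - 2 = (X ^ 2 - 4) * Jnat n ^ 2) ∧
    (Jnat (2 * n + 3) - Jnat (2 * n + 1) - X = (X ^ 2 - 4) * Jnat n * Jnat (n + 1)) := by
  induction n with
  | zero =>
    constructor
    · simp [Jnat, Jrec]; ring
    · show Jnat 3 - Jnat 1 - X = _
      simp [Jnat, Jrec]; ring
  | succ n ih =>
    obtain ⟨p, q⟩ := ih
    have e1 : 2 * (n + 1) + 2 = 2 * n + 2 + 2 := by ring
    have e2 : 2 * (n + 1) = 2 * n + 1 + 1 := by ring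
    have e3 : 2 * (n + 1) + 3 = 2 * n + 3 + 2 := by ring
    have e4 : 2 * (n + 1) + 1 = 2 * n + 3 := by ring
    have p' : Jnat (2 * (n + 1) + 2) - Jnat (2 * (n + 1)) - 2 =
        (X ^ 2 - 4) * Jnat (n + 1) ^ 2 := by
      rw [e1, e2]
      linear_combination X * q - p + Jrec (2 * n + 2) - Jrec (2 * n) +
        (X ^ 2 - 4) * (Jdet n - Jnat n * Jrec n)
    refine ⟨p', ?_⟩
    rw [e3, e4]
    have p'' := p'
    rw [e1, e2] at p''
    linear_combination X * p'' - q + Jrec (2 * n + 3) - Jrec (2 * n + 1) -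
      (X ^ 2 - 4) * Jnat (n + 1) * Jrec n

lemma Jcast (m : ℕ) : J (m : ℤ) = Jnat m := rfl

/-- Factorization of the characteristic polynomial of the even cyclic torus
link: for `k ≥ 1`, `2·(J (2k) - 1) - X·J (2k-1) = (X² - 4)·(J (k-1))²`. -/
theorem cyclic_torus_link_factorization (k : ℕ) (hk : 1 ≤ k) :
    2 * (J (2 * k) - 1) - X * J (2 * (k : ℤ) - 1) =
      (X ^ 2 - 4) * J ((k : ℤ) - 1) ^ 2 := by
  obtain ⟨n, rfl⟩ : ∃ n, k = n + 1 := ⟨k - 1, by omega⟩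
  have h1 : (2 * ((n + 1 : ℕ) : ℤ)) = ((2 * n + 2 : ℕ) : ℤ) := by push_cast; ring
  have h2 : (2 * ((n + 1 : ℕ) : ℤ) - 1) = ((2 * n + 1 : ℕ) : ℤ) := by push_cast; ring
  have h3 : (((n + 1 : ℕ) : ℤ) - 1) = ((n : ℕ) : ℤ) := by push_cast; ring
  rw [h2, h3, h1, Jcast, Jcast, Jcast]
  linear_combination (Jkey n).1 + Jrec (2 * n)
end

section
/- For every natural number k ≥ 1, the following identity holds in ℚ[X]: 3X·J_{k−1}·J_k² − 3X²·J_k·J_{k−1}² + (X³ − 2)·J_{k−1}³ − 3X·J_{k−1} = (X − 2)·(X + 1)²·J_{k−1}³. That is, G_{k,k,k} = (X − 2)(X + 1)² J_{k−1}³. -/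
open Polynomial

lemma Jnat_key (n : ℕ) :
    Jnat (n + 1) ^ 2 - X * Jnat (n + 1) * Jnat n + Jnat n ^ 2 = 1 := by
  induction n with
  | zero => simp [Jnat]; ring
  | succ m ih =>
      have h : Jnat (m + 2) = X * Jnat (m + 1) - Jnat m := rfl
      rw [h]
      linear_combination ih

lemma J_ofNat (n : ℕ) : J (n : ℤ) = Jnat n := rfl

/-- Factorization `G_{k,k,k} = (X - 2)(X + 1)² J (k-1) ³` of the characteristic
polynomial of the three-ribbon knot with equal ribbons, for `k ≥ 1`; the
factor `(X - 2)(X + 1)²` is the characteristic polynomial of the trefoil. -/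
theorem G_kkk_factorization (k : ℕ) (hk : 1 ≤ k) :
    3 * X * J ((k : ℤ) - 1) * J k ^ 2 - 3 * X ^ 2 * J k * J ((k : ℤ) - 1) ^ 2
        + (X ^ 3 - 2) * J ((k : ℤ) - 1) ^ 3 - 3 * X * J ((k : ℤ) - 1) =
      (X - 2) * (X + 1) ^ 2 * J ((k : ℤ) - 1) ^ 3 := by
  obtain ⟨m, rfl⟩ := Nat.exists_eq_add_of_le hk
  have h1 : ((1 + m : ℕ) : ℤ) - 1 = (m : ℤ) := by push_cast; ring
  rw [h1, J_ofNat, J_ofNat, show 1 + m = m + 1 from Nat.add_comm 1 m]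
  linear_combination (3 * (X : ℚ[X]) * Jnat m) * Jnat_key m
end
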